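/- Assume that g0⁺(z) > 0 for every z ∈ Z such that B*z = 0, T z = 0, and not (g0⁺(z) = 0 and g0⁺(−z) = 0). Then the z-subproblem is solvable: there exists ẑ ∈ dom g such that G(ẑ) ≤ G(z) for all z ∈ Z. -/

import Mathlib

open scoped RealInnerProductSpace
open Filter Bornology

noncomputable section

variable {X Y Z : Type*}
variable [NormedAddCommGroup X] [InnerProductSpace ℝ X] [FiniteDimensional ℝ X]
variable [NormedAddCommGroup Y] [InnerProductSpace ℝ Y] [FiniteDimensional ℝ Y]
variable [NormedAddCommGroup Z] [InnerProductSpace ℝ Z] [FiniteDimensional ℝ Z]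

/-- `f : E → ℝ ∪ {+∞}` is proper, convex and lower semicontinuous. -/
def ProperConvexLsc {E : Type*} [NormedAddCommGroup E] [InnerProductSpace ℝ E]
    (f : E → EReal) : Prop :=
  (∃ u, f u ≠ ⊤) ∧ (∀ u, f u ≠ ⊥) ∧
    (∀ u v : E, ∀ a b : ℝ, 0 ≤ a → 0 ≤ b → a + b = 1 →
      f (a • u + b • v) ≤ (a : EReal) * f u + (b : EReal) * f v) ∧
    LowerSemicontinuous f

/-- `frec` is the recession function of `f`:  for any `u₀` in the effective domain of `f`,
`frec u = lim_{ρ → +∞} (f (u₀ + ρ u) - f u₀) / ρ`. -/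
def IsRecessionFn {E : Type*} [NormedAddCommGroup E] [InnerProductSpace ℝ E]
    (f : E → EReal) (frec : E → EReal) : Prop :=
  ∀ u₀ : E, f u₀ ≠ ⊤ → ∀ u : E,
    Tendsto (fun ρ : ℝ => (f (u₀ + ρ • u) - f u₀) * ((ρ⁻¹ : ℝ) : EReal))
      atTop (nhds (frec u))

/-- The augmented Lagrangian `L_σ(y, z; x)` of the problem
`min f(y) + g(z)  s.t.  A* y + B* z = c`. -/
def augL (f : Y → EReal) (g : Z → EReal) (A : X →ₗ[ℝ] Y) (B : X →ₗ[ℝ] Z)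
    (c : X) (σ : ℝ) (y : Y) (z : Z) (x : X) : EReal :=
  f y + g z + ((⟪x, (LinearMap.adjoint A) y + (LinearMap.adjoint B) z - c⟫ : ℝ) : EReal)
    + ((σ / 2 * ‖(LinearMap.adjoint A) y + (LinearMap.adjoint B) z - c‖ ^ 2 : ℝ) : EReal)

/-- Objective of the `y`-subproblem:  `F(w) = L_σ(w, z'; x') + (1/2) ‖w - y'‖_S²`. -/
def ysub (f : Y → EReal) (g : Z → EReal) (A : X →ₗ[ℝ] Y) (B : X →ₗ[ℝ] Z)
    (c : X) (σ : ℝ) (S : Y →ₗ[ℝ] Y) (x' : X) (y' : Y) (z' : Z) (w : Y) : EReal :=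
  augL f g A B c σ w z' x' + ((⟪w - y', S (w - y')⟫ / 2 : ℝ) : EReal)

/-- Objective of the `z`-subproblem:  `G(w) = L_σ(y', w; x') + (1/2) ‖w - z'‖_T²`. -/
def zsub (f : Y → EReal) (g : Z → EReal) (A : X →ₗ[ℝ] Y) (B : X →ₗ[ℝ] Z)
    (c : X) (σ : ℝ) (T : Z →ₗ[ℝ] Z) (x' : X) (y' : Y) (z' : Z) (w : Z) : EReal :=
  augL f g A B c σ y' w x' + ((⟪w - z', T (w - z')⟫ / 2 : ℝ) : EReal)

/-!
Write `G = f y' + (g + φ)` with `φ` the smooth quadratic part of the augmented Lagrangian.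
The function `g + φ` is invariant under translation by the subspace `L` of directions `l` with
`B* l = 0`, `T l = 0` along which `g` is constant, so it suffices to minimize it over `Lᗮ`,
where its sublevel sets are bounded. Indeed, an unbounded closed convex sublevel set contains a
ray `p + ℝ₊ d` with `‖d‖ = 1` and `d ∈ Lᗮ`. Since `g0⁺ > -∞`, `g` decreases at most linearly
along the ray, so the quadratic part of `φ` vanishes at `d`: `B* d = 0` and `T d = 0`. Then `g`
is bounded above along the ray, so `g0⁺(d) ≤ 0`, and the hypothesis forces
`g0⁺(d) = g0⁺(-d) = 0`, which makes `g` constant along `d`, i.e. `d ∈ L`; hence `d = 0`, a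
contradiction. A lower semicontinuous function attains its minimum on the resulting compact
sublevel set.
-/

def EConvex {E : Type*} [AddCommGroup E] [Module ℝ E] (g : E → EReal) : Prop :=
  ∀ u v : E, ∀ a b : ℝ, 0 ≤ a → 0 ≤ b → a + b = 1 →
    g (a • u + b • v) ≤ (a : EReal) * g u + (b : EReal) * g v

def constancySpace {E β : Type*} [AddCommGroup E] [Module ℝ E] (g : E → β) : Submodule ℝ E where
  carrier := {l | ∀ (t : ℝ) (u : E), g (u + t • l) = g u}
  add_mem' {l m} hl hm t u := by rw [smul_add, ← add_assoc, hm, hl]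
  zero_mem' := by simp
  smul_mem' s l hl t u := by rw [smul_smul]; exact hl _ u

theorem EConvex.diffQuot_mono {E : Type*} [AddCommGroup E] [Module ℝ E] {g : E → EReal}
    (hconv : EConvex g) (hbot : ∀ u, g u ≠ ⊥) {u₀ : E} (hu₀ : g u₀ ≠ ⊤) (d : E) {ρ₁ ρ₂ : ℝ}
    (hρ₁ : 0 < ρ₁) (hρ : ρ₁ ≤ ρ₂) :
    (g (u₀ + ρ₁ • d) - g u₀) * ((ρ₁⁻¹ : ℝ) : EReal)
      ≤ (g (u₀ + ρ₂ • d) - g u₀) * ((ρ₂⁻¹ : ℝ) : EReal) := by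
  have hρ₂ : 0 < ρ₂ := hρ₁.trans_le hρ
  lift g u₀ to ℝ using ⟨hu₀, hbot u₀⟩ with c hc
  rcases eq_or_ne (g (u₀ + ρ₂ • d)) ⊤ with h₂ | h₂
  · rw [h₂, EReal.top_sub_coe, EReal.top_mul_of_pos (by exact_mod_cast inv_pos.mpr hρ₂)]
    exact le_top
  lift g (u₀ + ρ₂ • d) to ℝ using ⟨h₂, hbot _⟩ with x₂ hx₂
  set t := ρ₁ / ρ₂
  have hcomb : (1 - t) • u₀ + t • (u₀ + ρ₂ • d) = u₀ + ρ₁ • d := by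
    rw [smul_add, smul_smul, div_mul_cancel₀ _ hρ₂.ne']
    module
  have hle := hconv u₀ (u₀ + ρ₂ • d) (1 - t) t (sub_nonneg.2 ((div_le_one hρ₂).2 hρ))
    (by positivity) (by ring)
  rw [hcomb, ← hc, ← hx₂] at hle
  have hle' : g (u₀ + ρ₁ • d) ≤ (((1 - t) * c + t * x₂ : ℝ) : EReal) := by exact_mod_cast hle
  lift g (u₀ + ρ₁ • d) to ℝ using ⟨ne_top_of_le_ne_top (EReal.coe_ne_top _) hle', hbot _⟩
    with x₁
  rw [← EReal.coe_sub, ← EReal.coe_sub, ← EReal.coe_mul, ← EReal.coe_mul, EReal.coe_le_coe_iff,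
    ← div_eq_mul_inv, ← div_eq_mul_inv, div_le_div_iff₀ hρ₁ hρ₂]
  have := mul_le_mul_of_nonneg_right (EReal.coe_le_coe_iff.1 hle') hρ₂.le
  simp only [t] at this
  field_simp at this
  linarith

theorem EReal.add_coe_le_coe_iff {x : EReal} {r a : ℝ} :
    x + r ≤ a ↔ x ≤ ((a - r : ℝ) : EReal) := by
  rw [EReal.coe_sub,
    EReal.le_sub_iff_add_le (.inl (EReal.coe_ne_bot r)) (.inl (EReal.coe_ne_top r))]

theorem EConvex.convex_setOf_add_le {E : Type*} [AddCommGroup E] [Module ℝ E] {g : E → EReal}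
    {φ : E → ℝ} (hg : EConvex g) (hφ : ConvexOn ℝ Set.univ φ) (a : ℝ) :
    Convex ℝ {w | g w + φ w ≤ a} := by
  intro u hu v hv s t hs ht hst
  simp only [Set.mem_ofPred_eq, EReal.add_coe_le_coe_iff] at hu hv ⊢
  calc g (s • u + t • v) ≤ s * g u + t * g v := hg u v s t hs ht hst
    _ ≤ s * ((a - φ u : ℝ) : EReal) + t * ((a - φ v : ℝ) : EReal) :=
        add_le_add (mul_le_mul_of_nonneg_left hu (EReal.coe_nonneg.2 hs))
          (mul_le_mul_of_nonneg_left hv (EReal.coe_nonneg.2 ht))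
    _ = ((a - (s * φ u + t * φ v) : ℝ) : EReal) := by
        rw [← EReal.coe_mul, ← EReal.coe_mul, ← EReal.coe_add]
        congr 1
        linear_combination a * hst
    _ ≤ ((a - φ (s • u + t • v) : ℝ) : EReal) :=
        EReal.coe_le_coe_iff.2 <| sub_le_sub_left
          (by simpa only [smul_eq_mul] using hφ.2 (Set.mem_univ u) (Set.mem_univ v) hs ht hst) a

section Recession

variable {E : Type*} [NormedAddCommGroup E] [InnerProductSpace ℝ E] {g grec : E → EReal}

theorem EConvex.diffQuot_le_recession (hconv : EConvex g) (hbot : ∀ u, g u ≠ ⊥)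
    (hgrec : IsRecessionFn g grec) {u₀ : E} (hu₀ : g u₀ ≠ ⊤) (d : E) {ρ : ℝ} (hρ : 0 < ρ) :
    (g (u₀ + ρ • d) - g u₀) * ((ρ⁻¹ : ℝ) : EReal) ≤ grec d :=
  ge_of_tendsto (hgrec u₀ hu₀ d) <| (eventually_ge_atTop ρ).mono fun _ h ↦
    hconv.diffQuot_mono hbot hu₀ d hρ h

theorem EConvex.recession_ne_bot (hconv : EConvex g) (hbot : ∀ u, g u ≠ ⊥)
    (hgrec : IsRecessionFn g grec) {u₀ : E} (hu₀ : g u₀ ≠ ⊤) (d : E) : grec d ≠ ⊥ := by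
  have h := hconv.diffQuot_le_recession hbot hgrec hu₀ d one_pos
  lift g u₀ to ℝ using ⟨hu₀, hbot u₀⟩ with c hc
  rw [one_smul, inv_one, EReal.coe_one, mul_one] at h
  refine ne_bot_of_le_ne_bot ?_ h
  rw [sub_eq_add_neg, ← EReal.coe_neg, Ne, EReal.add_eq_bot_iff]
  simp [hbot]

theorem IsRecessionFn.le_of_eventually_le (hgrec : IsRecessionFn g grec) {u₀ : E} {c : ℝ}
    (hu₀ : g u₀ = c) (d : E) {M b : ℝ}
    (hle : ∀ᶠ ρ in atTop, g (u₀ + ρ • d) ≤ ((M + b * ρ : ℝ) : EReal)) : grec d ≤ b := by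
  have hlim : Tendsto (fun ρ : ℝ ↦ (((M - c) * ρ⁻¹ + b : ℝ) : EReal)) atTop (nhds b) := by
    refine EReal.tendsto_coe.2 ?_
    simpa using (tendsto_inv_atTop_zero.const_mul (M - c)).add_const b
  refine le_of_tendsto_of_tendsto (hgrec u₀ (hu₀ ▸ EReal.coe_ne_top c) d) hlim ?_
  filter_upwards [hle, eventually_gt_atTop 0] with ρ hρ hρ₀
  rw [hu₀]
  calc (g (u₀ + ρ • d) - c) * ((ρ⁻¹ : ℝ) : EReal)
      ≤ ((M + b * ρ - c : ℝ) : EReal) * ((ρ⁻¹ : ℝ) : EReal) := by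
        rw [EReal.coe_sub]
        exact mul_le_mul_of_nonneg_right (EReal.sub_le_sub hρ le_rfl)
          (EReal.coe_nonneg.2 (inv_nonneg.2 hρ₀.le))
    _ = (((M - c) * ρ⁻¹ + b : ℝ) : EReal) := by
        rw [← EReal.coe_mul]
        congr 1
        field_simp
        ring

theorem EConvex.not_forall_le_sub_mul_sq (hconv : EConvex g) (hbot : ∀ u, g u ≠ ⊥)
    (hgrec : IsRecessionFn g grec) {u₀ : E} {c : ℝ} (hu₀ : g u₀ = c) (d : E) {M b γ : ℝ}
    (hγ : 0 < γ) : ¬ ∀ ρ > 0, g (u₀ + ρ • d) ≤ ((M + b * ρ - γ * ρ ^ 2 : ℝ) : EReal) := by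
  intro hle
  obtain ⟨r, -, hr⟩ := EReal.lt_iff_exists_real_btwn.1
    (bot_lt_iff_ne_bot.2 (hconv.recession_ne_bot hbot hgrec (hu₀ ▸ EReal.coe_ne_top c) d))
  refine hr.not_ge (hgrec.le_of_eventually_le hu₀ d (M := M) ?_)
  filter_upwards [eventually_gt_atTop 0, eventually_ge_atTop ((b - r) / γ)] with ρ hρ hρr
  refine (hle ρ hρ).trans (EReal.coe_le_coe_iff.2 ?_)
  have : b - r ≤ γ * ρ := by rwa [div_le_iff₀ hγ, mul_comm] at hρr
  nlinarith

theorem EConvex.le_of_recession_nonpos (hconv : EConvex g) (hbot : ∀ u, g u ≠ ⊥)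
    (hgrec : IsRecessionFn g grec) {d : E} (hd : grec d ≤ 0) (u : E) {ρ : ℝ} (hρ : 0 ≤ ρ) :
    g (u + ρ • d) ≤ g u := by
  rcases eq_or_ne (g u) ⊤ with hu | hu
  · exact hu ▸ le_top
  rcases hρ.eq_or_lt with rfl | hρ
  · simp
  have h := (hconv.diffQuot_le_recession hbot hgrec hu d hρ).trans hd
  lift g u to ℝ using ⟨hu, hbot u⟩ with c
  rcases eq_or_ne (g (u + ρ • d)) ⊤ with htop | htop
  · rw [htop, EReal.top_sub_coe, EReal.top_mul_of_pos (by exact_mod_cast inv_pos.2 hρ)] at h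
    exact absurd h (by simp)
  lift g (u + ρ • d) to ℝ using ⟨htop, hbot _⟩ with x
  rw [← EReal.coe_sub, ← EReal.coe_mul, ← EReal.coe_zero, EReal.coe_le_coe_iff] at h
  rw [EReal.coe_le_coe_iff, ← sub_nonpos]
  exact nonpos_of_mul_nonpos_left h (inv_pos.2 hρ)

theorem EConvex.mem_constancySpace_of_recession_nonpos (hconv : EConvex g)
    (hbot : ∀ u, g u ≠ ⊥) (hgrec : IsRecessionFn g grec) {d : E} (hd : grec d ≤ 0)
    (hd' : grec (-d) ≤ 0) :
    d ∈ constancySpace g := by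
  have hle : ∀ (t : ℝ) u, g (u + t • d) ≤ g u := by
    intro t u
    rcases le_total 0 t with ht | ht
    · exact hconv.le_of_recession_nonpos hbot hgrec hd u ht
    · simpa using hconv.le_of_recession_nonpos hbot hgrec hd' u (neg_nonneg.2 ht)
  intro t u
  refine (hle t u).antisymm ?_
  simpa using hle (-t) (u + t • d)

end Recession

theorem Convex.exists_norm_eq_one_forall_add_smul_mem {E : Type*} [NormedAddCommGroup E]
    [NormedSpace ℝ E] [ProperSpace E] {C : Set E} (hconv : Convex ℝ C) (hclosed : IsClosed C)
    (hunb : ¬ IsBounded C) {p : E} (hp : p ∈ C) :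
    ∃ d : E, ‖d‖ = 1 ∧ ∀ ρ : ℝ, 0 ≤ ρ → p + ρ • d ∈ C := by
  have hfar : ∀ n : ℕ, ∃ w ∈ C, (n : ℝ) < ‖w - p‖ := by
    intro n
    by_contra! h
    exact hunb ((Metric.isBounded_closedBall (x := p) (r := n)).subset fun w hw ↦
      mem_closedBall_iff_norm.2 (h w hw))
  choose w hwC hwn using hfar
  have hpos : ∀ n, 0 < ‖w n - p‖ := fun n ↦ (Nat.cast_nonneg n).trans_lt (hwn n)
  obtain ⟨d, hd, ψ, hψ, hlim⟩ := (isCompact_sphere (0 : E) 1).tendsto_subseq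
    (x := fun n ↦ ‖w n - p‖⁻¹ • (w n - p)) fun n ↦ by
      simp [norm_smul, (hpos n).ne']
  refine ⟨d, mem_sphere_zero_iff_norm.1 hd, fun ρ hρ ↦ ?_⟩
  have hgrow : Tendsto (fun k ↦ ‖w (ψ k) - p‖) atTop atTop :=
    tendsto_atTop_mono (fun k ↦ (hwn (ψ k)).le)
      (tendsto_natCast_atTop_atTop.comp hψ.tendsto_atTop)
  refine hclosed.mem_of_tendsto (tendsto_const_nhds.add (hlim.const_smul ρ)) ?_
  filter_upwards [hgrow.eventually_ge_atTop ρ] with k hk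
  have ht : ρ / ‖w (ψ k) - p‖ ∈ Set.Icc (0 : ℝ) 1 :=
    ⟨div_nonneg hρ (norm_nonneg _), div_le_one_of_le₀ hk (norm_nonneg _)⟩
  convert hconv.add_smul_sub_mem hp (hwC (ψ k)) ht using 2
  simp only [Function.comp_apply, smul_smul, div_eq_mul_inv]

theorem LinearMap.IsPositive.apply_eq_zero_of_inner_map_self_eq_zero {E : Type*}
    [NormedAddCommGroup E] [InnerProductSpace ℝ E] {T : E →ₗ[ℝ] E} (hT : T.IsPositive) {d : E}
    (hd : ⟪d, T d⟫ = 0) : T d = 0 := by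
  set a := ⟪T d, T d⟫
  set b := ⟪T d, T (T d)⟫
  have hb : 0 ≤ b := hT.inner_nonneg_right _
  -- `0 ≤ ⟪d - t • T d, T (d - t • T d)⟫ = b t² - 2 a t` at `t = a / (b + 1)` forces `a = 0`
  have key := hT.inner_nonneg_right (d - (a / (b + 1)) • T d)
  have hsym : ⟪T d, T d⟫ = ⟪d, T (T d)⟫ := hT.isSymmetric _ _
  simp only [map_sub, map_smul, inner_sub_left, inner_sub_right, real_inner_smul_left,
    real_inner_smul_right, hd, ← hsym] at key
  have ha : a = 0 := by
    have hb1 : 0 < b + 1 := by linarith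
    have : a * a * (b + 2) ≤ 0 := by
      field_simp at key
      nlinarith
    nlinarith [real_inner_self_nonneg (x := T d)]
  exact inner_self_eq_zero.1 ha

theorem LinearMap.IsSymmetric.inner_convexComb_apply {E : Type*} [NormedAddCommGroup E]
    [InnerProductSpace ℝ E] {T : E →ₗ[ℝ] E} (hT : T.IsSymmetric) (u v : E) (t : ℝ) :
    ⟪(1 - t) • u + t • v, T ((1 - t) • u + t • v)⟫
      = (1 - t) * ⟪u, T u⟫ + t * ⟪v, T v⟫ - t * (1 - t) * ⟪v - u, T (v - u)⟫ := by
  have huv : ⟪v, T u⟫ = ⟪u, T v⟫ := by rw [← hT, real_inner_comm]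
  simp only [map_add, map_sub, map_smul, inner_add_left, inner_add_right, inner_sub_left,
    inner_sub_right, real_inner_smul_left, real_inner_smul_right, huv]
  ring

theorem norm_convexComb_sq {E : Type*} [NormedAddCommGroup E] [InnerProductSpace ℝ E]
    (u v : E) (t : ℝ) :
    ‖(1 - t) • u + t • v‖ ^ 2 = (1 - t) * ‖u‖ ^ 2 + t * ‖v‖ ^ 2 - t * (1 - t) * ‖v - u‖ ^ 2 := by
  simpa [real_inner_self_eq_norm_sq] using LinearMap.IsSymmetric.id.inner_convexComb_apply u v t

theorem LowerSemicontinuous.add_continuous_coe {E : Type*} [TopologicalSpace E] {g : E → EReal}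
    {φ : E → ℝ} (hg : LowerSemicontinuous g) (hφ : Continuous φ) :
    LowerSemicontinuous fun w ↦ g w + φ w :=
  hg.add' (continuous_coe_real_ereal.comp hφ).lowerSemicontinuous fun _ ↦
    EReal.continuousAt_add (.inr (EReal.coe_ne_bot _)) (.inr (EReal.coe_ne_top _))

theorem exists_forall_le_of_isBounded_orthogonal {E : Type*} [NormedAddCommGroup E]
    [InnerProductSpace ℝ E] [FiniteDimensional ℝ E] {H : E → EReal} (hH : LowerSemicontinuous H)
    {L : Submodule ℝ E} (hinv : ∀ w, ∀ l ∈ L, H (w + l) = H w) {a : EReal}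
    (hbdd : IsBounded {w | w ∈ Lᗮ ∧ H w ≤ a}) {z : E} (hz : H z ≤ a) :
    ∃ zhat, ∀ w, H zhat ≤ H w := by
  have hproj : ∀ w, ∃ p ∈ Lᗮ, H p = H w := by
    intro w
    obtain ⟨l, hl, p, hp, rfl⟩ := L.exists_add_mem_mem_orthogonal w
    exact ⟨p, hp, by rw [add_comm, hinv p l hl]⟩
  set S := {w | w ∈ Lᗮ ∧ H w ≤ a}
  have hS : IsCompact S := Metric.isCompact_of_isClosed_isBounded
    ((Submodule.isClosed_orthogonal L).inter (hH.isClosed_preimage a)) hbdd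
  obtain ⟨p, hp, hpz⟩ := hproj z
  obtain ⟨zhat, hzhat, hmin⟩ := (hH.lowerSemicontinuousOn S).exists_isMinOn
    (⟨p, hp, hpz ▸ hz⟩ : S.Nonempty) hS
  refine ⟨zhat, fun w ↦ ?_⟩
  obtain ⟨q, hq, hqw⟩ := hproj w
  rw [← hqw]
  rcases le_or_gt (H q) a with hqa | hqa
  · exact hmin ⟨hq, hqa⟩
  · exact hzhat.2.trans hqa.le

def zsubSmooth (A : X →ₗ[ℝ] Y) (B : X →ₗ[ℝ] Z) (c : X) (σ : ℝ) (T : Z →ₗ[ℝ] Z) (x' : X) (y' : Y)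
    (z' : Z) (w : Z) : ℝ :=
  ⟪x', A.adjoint y' + B.adjoint w - c⟫ + σ / 2 * ‖A.adjoint y' + B.adjoint w - c‖ ^ 2
    + ⟪w - z', T (w - z')⟫ / 2

def zsubQuad (B : X →ₗ[ℝ] Z) (σ : ℝ) (T : Z →ₗ[ℝ] Z) (d : Z) : ℝ :=
  σ / 2 * ‖B.adjoint d‖ ^ 2 + ⟪d, T d⟫ / 2

def zsubLineality (B : X →ₗ[ℝ] Z) (T : Z →ₗ[ℝ] Z) (g : Z → EReal) : Submodule ℝ Z :=
  LinearMap.ker (LinearMap.adjoint B) ⊓ LinearMap.ker T ⊓ constancySpace g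

section zSubproblem

variable (A : X →ₗ[ℝ] Y) (c x' : X) (y' : Y) (z' : Z) {B : X →ₗ[ℝ] Z} {σ : ℝ}
  {T : Z →ₗ[ℝ] Z} {g grec : Z → EReal}

local notation "φ" => zsubSmooth A B c σ T x' y' z'

theorem zsub_eq (f : Y → EReal) (w : Z) :
    zsub f g A B c σ T x' y' z' w = f y' + (g w + φ w) := by
  simp only [zsub, augL, zsubSmooth, EReal.coe_add]
  abel

theorem continuous_zsubSmooth : Continuous φ := by
  have := (LinearMap.adjoint B : Z →ₗ[ℝ] X).continuous_of_finiteDimensional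
  have := T.continuous_of_finiteDimensional
  unfold zsubSmooth
  fun_prop

theorem zsubSmooth_convexComb (hT : T.IsSymmetric) (u v : Z) (t : ℝ) :
    φ ((1 - t) • u + t • v)
      = (1 - t) * φ u + t * φ v - t * (1 - t) * zsubQuad B σ T (v - u) := by
  have hr : A.adjoint y' + B.adjoint ((1 - t) • u + t • v) - c
      = (1 - t) • (A.adjoint y' + B.adjoint u - c) + t • (A.adjoint y' + B.adjoint v - c) := by
    simp only [map_add, map_smul]
    module
  have hrB : B.adjoint (v - u)
      = (A.adjoint y' + B.adjoint v - c) - (A.adjoint y' + B.adjoint u - c) := by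
    rw [map_sub]
    abel
  have hs : (1 - t) • u + t • v - z' = (1 - t) • (u - z') + t • (v - z') := by module
  have hs' : v - u = (v - z') - (u - z') := by abel
  simp only [zsubSmooth, zsubQuad]
  rw [hr, hs, hrB, hs', norm_convexComb_sq, hT.inner_convexComb_apply, inner_add_right,
    real_inner_smul_right, real_inner_smul_right]
  ring

theorem zsubSmooth_add_smul (hT : T.IsSymmetric) (p d : Z) (ρ : ℝ) :
    φ (p + ρ • d)
      = φ p + (φ (p + d) - φ p - zsubQuad B σ T d) * ρ + zsubQuad B σ T d * ρ ^ 2 := by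
  rw [show p + ρ • d = (1 - ρ) • p + ρ • (p + d) by module,
    zsubSmooth_convexComb A c x' y' z' hT, add_sub_cancel_left]
  ring

theorem zsubSmooth_add_of_mem_ker (hT : T.IsSymmetric) (w : Z) {l : Z}
    (hB : l ∈ LinearMap.ker B.adjoint) (hTl : l ∈ LinearMap.ker T) : φ (w + l) = φ w := by
  rw [LinearMap.mem_ker] at hB hTl
  have hl : ⟪l, T (w - z')⟫ = 0 := by rw [← hT, hTl, inner_zero_left]
  simp only [zsubSmooth, map_add, hB, add_zero, add_sub_right_comm w l z', hTl, inner_add_left,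
    hl]

theorem zsubQuad_nonneg (hσ : 0 ≤ σ) (hT : T.IsPositive) (d : Z) : 0 ≤ zsubQuad B σ T d := by
  have := hT.inner_nonneg_right d
  unfold zsubQuad
  positivity

theorem zsubQuad_eq_zero_iff (hσ : 0 < σ) (hT : T.IsPositive) {d : Z} :
    zsubQuad B σ T d = 0 ↔ d ∈ LinearMap.ker B.adjoint ∧ d ∈ LinearMap.ker T := by
  have hTd := hT.inner_nonneg_right d
  have hBd := mul_nonneg hσ.le (sq_nonneg ‖B.adjoint d‖)
  constructor
  · intro h
    unfold zsubQuad at h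
    have hB : ‖B.adjoint d‖ ^ 2 = 0 := by nlinarith [sq_nonneg ‖B.adjoint d‖]
    exact ⟨by simpa using hB, hT.apply_eq_zero_of_inner_map_self_eq_zero (by nlinarith)⟩
  · rintro ⟨hB, hTd⟩
    rw [LinearMap.mem_ker] at hB hTd
    simp [zsubQuad, hB, hTd]

theorem convexOn_zsubSmooth (hσ : 0 ≤ σ) (hT : T.IsPositive) : ConvexOn ℝ Set.univ φ := by
  refine ⟨convex_univ, fun u _ v _ a b ha hb hab ↦ ?_⟩
  obtain rfl : a = 1 - b := by linarith
  rw [smul_eq_mul, smul_eq_mul, zsubSmooth_convexComb A c x' y' z' hT.isSymmetric]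
  nlinarith [zsubQuad_nonneg (B := B) hσ hT (v - u), mul_nonneg ha hb]

theorem zsubObjective_add_of_mem_lineality (hT : T.IsSymmetric) (w : Z) {l : Z}
    (hl : l ∈ zsubLineality B T g) : g (w + l) + φ (w + l) = g w + φ w := by
  obtain ⟨⟨hB, hTl⟩, hg⟩ := hl
  have hgl : g (w + l) = g w := by simpa using hg 1 w
  rw [zsubSmooth_add_of_mem_ker A c x' y' z' hT w hB hTl, hgl]

theorem mem_zsubLineality_of_forall_le (hσ : 0 < σ) (hT : T.IsPositive) (hconv : EConvex g)
    (hbot : ∀ u, g u ≠ ⊥) (hgrec : IsRecessionFn g grec)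
    (hass : ∀ w : Z, (LinearMap.adjoint B) w = 0 → T w = 0 →
      ¬(grec w = 0 ∧ grec (-w) = 0) → 0 < grec w)
    {p d : Z} {a : ℝ} (hray : ∀ ρ : ℝ, 0 ≤ ρ → g (p + ρ • d) + φ (p + ρ • d) ≤ a) :
    d ∈ zsubLineality B T g := by
  have hle : ∀ ρ : ℝ, 0 ≤ ρ → g (p + ρ • d) ≤ ((a - φ (p + ρ • d) : ℝ) : EReal) :=
    fun ρ hρ ↦ EReal.add_coe_le_coe_iff.1 (hray ρ hρ)
  obtain ⟨c₀, hc₀⟩ : ∃ c₀ : ℝ, g p = c₀ := by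
    have h := hle 0 le_rfl
    rw [zero_smul, add_zero] at h
    exact ⟨(g p).toReal,
      (EReal.coe_toReal (ne_top_of_le_ne_top (EReal.coe_ne_top _) h) (hbot p)).symm⟩
  -- along the ray `φ` grows like `zsubQuad d * ρ ^ 2`, which `g` cannot compensate for
  have hQ : zsubQuad B σ T d = 0 := by
    refine ((zsubQuad_nonneg hσ.le hT d).eq_or_lt.resolve_right fun hQ ↦ ?_).symm
    refine hconv.not_forall_le_sub_mul_sq hbot hgrec hc₀ d (M := a - φ p)
      (b := -(φ (p + d) - φ p - zsubQuad B σ T d)) hQ fun ρ hρ ↦ (hle ρ hρ.le).trans_eq ?_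
    rw [zsubSmooth_add_smul A c x' y' z' hT.isSymmetric]
    ring_nf
  obtain ⟨hB, hTd⟩ := (zsubQuad_eq_zero_iff hσ hT).1 hQ
  have hrec : grec d ≤ 0 := by
    refine EReal.coe_zero ▸ hgrec.le_of_eventually_le hc₀ d (M := a - φ p) (b := 0) ?_
    filter_upwards [eventually_ge_atTop 0] with ρ hρ
    rw [zero_mul, add_zero, ← zsubSmooth_add_of_mem_ker A c x' y' z' hT.isSymmetric p
      (Submodule.smul_mem _ ρ hB) (Submodule.smul_mem _ ρ hTd)]
    exact hle ρ hρ
  have hrec' : grec d = 0 ∧ grec (-d) = 0 := by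
    by_contra h
    exact (hass d hB hTd h).not_ge hrec
  exact ⟨⟨hB, hTd⟩,
    hconv.mem_constancySpace_of_recession_nonpos hbot hgrec hrec'.1.le hrec'.2.le⟩

theorem isBounded_zsub_sublevel (hσ : 0 < σ) (hT : T.IsPositive) (hconv : EConvex g)
    (hbot : ∀ u, g u ≠ ⊥) (hlsc : LowerSemicontinuous g) (hgrec : IsRecessionFn g grec)
    (hass : ∀ w : Z, (LinearMap.adjoint B) w = 0 → T w = 0 →
      ¬(grec w = 0 ∧ grec (-w) = 0) → 0 < grec w) (a : ℝ) :
    IsBounded {w | w ∈ (zsubLineality B T g)ᗮ ∧ g w + φ w ≤ a} := by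
  set L := zsubLineality B T g
  by_contra hunb
  obtain ⟨p, hp⟩ := nonempty_of_not_isBounded hunb
  have hconvS : Convex ℝ {w | w ∈ Lᗮ ∧ g w + φ w ≤ a} :=
    Lᗮ.convex.inter (hconv.convex_setOf_add_le (convexOn_zsubSmooth A c x' y' z' hσ.le hT) a)
  have hclosed : IsClosed {w | w ∈ Lᗮ ∧ g w + φ w ≤ a} :=
    (Submodule.isClosed_orthogonal L).inter
      ((hlsc.add_continuous_coe (continuous_zsubSmooth A c x' y' z')).isClosed_preimage a)
  obtain ⟨d, hd, hray⟩ := hconvS.exists_norm_eq_one_forall_add_smul_mem hclosed hunb hp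
  have hdK : d ∈ Lᗮ := by simpa using Lᗮ.sub_mem (hray 1 zero_le_one).1 hp.1
  have hdL : d ∈ L := mem_zsubLineality_of_forall_le A c x' y' z' hσ hT hconv hbot hgrec hass
    fun ρ hρ ↦ (hray ρ hρ).2
  rw [inner_self_eq_zero.1 (Submodule.inner_right_of_mem_orthogonal hdL hdK), norm_zero] at hd
  exact zero_ne_one hd

end zSubproblem

theorem stmt_2_general
    (f : Y → EReal) (g : Z → EReal)
    (hg : ProperConvexLsc g)
    (A : X →ₗ[ℝ] Y) (B : X →ₗ[ℝ] Z) (c : X)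
    (σ : ℝ) (hσ : 0 < σ)
    (T : Z →ₗ[ℝ] Z) (hTsym : T.IsSymmetric) (hTpsd : ∀ w : Z, 0 ≤ ⟪w, T w⟫)
    (x' : X) (y' : Y) (z' : Z) (hz' : g z' ≠ ⊤)
    (grec : Z → EReal) (hgrec : IsRecessionFn g grec)
    (hass : ∀ w : Z, (LinearMap.adjoint B) w = 0 → T w = 0 →
      ¬(grec w = 0 ∧ grec (-w) = 0) → 0 < grec w) :
    ∃ zhat : Z, g zhat ≠ ⊤ ∧
      ∀ w : Z, zsub f g A B c σ T x' y' z' zhat ≤ zsub f g A B c σ T x' y' z' w := by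
  obtain ⟨-, hbot, hconv, hlsc⟩ := hg
  have hT : T.IsPositive := T.isPositive_iff.2 ⟨hTsym, fun w ↦ real_inner_comm w (T w) ▸ hTpsd w⟩
  set φ := zsubSmooth A B c σ T x' y' z'
  obtain ⟨a, ha⟩ : ∃ a : ℝ, g z' + φ z' = a :=
    ⟨(g z').toReal + φ z', by rw [EReal.coe_add, EReal.coe_toReal hz' (hbot z')]⟩
  obtain ⟨zhat, hmin⟩ := exists_forall_le_of_isBounded_orthogonal
    (hlsc.add_continuous_coe (continuous_zsubSmooth A c x' y' z'))
    (fun w l hl ↦ zsubObjective_add_of_mem_lineality A c x' y' z' hTsym w hl)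
    (isBounded_zsub_sublevel A c x' y' z' hσ hT hconv hbot hlsc hgrec hass a) ha.le
  refine ⟨zhat, fun htop ↦ ?_, fun w ↦ ?_⟩
  · have h := (hmin z').trans_eq ha
    rw [htop, EReal.top_add_coe] at h
    exact EReal.coe_ne_top a (top_le_iff.1 h)
  · rw [zsub_eq, zsub_eq]
    exact add_le_add le_rfl (hmin w)

/-- **Proposition 1(a), z-part.**  If `g0⁺(w) > 0` for every `w` with `B* w = 0`, `T w = 0`
and not (`g0⁺(w) = 0` and `g0⁺(-w) = 0`), then the `z`-subproblem is solvable. -/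
theorem stmt_2
    (f : Y → EReal) (g : Z → EReal)
    (hf : ProperConvexLsc f) (hg : ProperConvexLsc g)
    (A : X →ₗ[ℝ] Y) (B : X →ₗ[ℝ] Z) (c : X)
    (σ : ℝ) (hσ : 0 < σ)
    (S : Y →ₗ[ℝ] Y) (hSsym : S.IsSymmetric) (hSpsd : ∀ w : Y, 0 ≤ ⟪w, S w⟫)
    (T : Z →ₗ[ℝ] Z) (hTsym : T.IsSymmetric) (hTpsd : ∀ w : Z, 0 ≤ ⟪w, T w⟫)
    (x' : X) (y' : Y) (z' : Z) (hy' : f y' ≠ ⊤) (hz' : g z' ≠ ⊤)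
    (grec : Z → EReal) (hgrec : IsRecessionFn g grec)
    (hass : ∀ w : Z, (LinearMap.adjoint B) w = 0 → T w = 0 →
      ¬(grec w = 0 ∧ grec (-w) = 0) → 0 < grec w) :
    ∃ zhat : Z, g zhat ≠ ⊤ ∧
      ∀ w : Z, zsub f g A B c σ T x' y' z' zhat ≤ zsub f g A B c σ T x' y' z' w :=
  stmt_2_general f g hg A B c σ hσ T hTsym hTpsd x' y' z' hz' grec hgrec hass
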